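/- arXiv:1908.10438 — 7 statements merged into one kernel-verified Lean document; each statement's English description precedes it below -/
import Mathlib

section
/- Let f be a nonnegative, nondecreasing cost function on the positive integers, let C > 0, and let H ≥ 1 satisfy f(H) ≤ λ ≤ f(H+1), where λ := (Σ_{j=1}^{H} f(j) + C)/H. Define S : ℤ⁺ → ℝ by S(h) = Σ_{j=h}^{H} f(j) + C − (H − h + 1)·λ for 1 ≤ h ≤ H, and S(h) = f(h) + C − λ for h ≥ H. Then: (i) S(1) = 0; (ii) S is nondecreasing; (iii) S satisfies the average-cost Bellman equation S(h) = f(h) − λ + min{C, S(h+1)} for every h ≥ 1; and (iv) the minimum in (iii) is attained by C for h ≥ H (i.e., S(h+1) ≥ C for h ≥ H) and by S(h+1) for h < H (i.e., S(h+1) ≤ C for h < H). Hence the stationary threshold policy that activates exactly in states h ≥ H solves the Bellman optimality equation of the decoupled problem with optimal average cost λ. -/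
/-!
Below the threshold, `S (h + 1) - S h = λ - f h ≥ 0` because `f ≤ f H ≤ λ` there, and `S (h + 1) ≤ C`
because the tail `∑_{j=h+1}^{H} f j` is at most `(H - h) λ`; the choice of `λ` as the average cost
of the cycle `1, …, H` makes `S 1 = 0`. At and above the threshold, `S (h + 1) = f (h + 1) + C - λ ≥ C`
since `f (h + 1) ≥ f (H + 1) ≥ λ`. So the minimum in the Bellman equation is `S (h + 1)` below `H`
and `C` from `H` on, and in both regimes the equation reduces to the formulas defining `S`.
-/

open Finset

lemma sum_Ioc_le_mul_of_le {f : ℕ → ℝ} {a b : ℕ} {c : ℝ} (hab : a ≤ b)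
    (hf : ∀ j ∈ Ioc a b, f j ≤ c) : ∑ j ∈ Ioc a b, f j ≤ ((b : ℝ) - a) * c := by
  refine (sum_le_card_nsmul _ _ _ hf).trans_eq ?_
  rw [Nat.card_Ioc, nsmul_eq_mul, Nat.cast_sub hab]

/-- The differential cost-to-go of the threshold policy in the states `h ≤ H`. -/
def lowerCostToGo (f : ℕ → ℝ) (C lam : ℝ) (H h : ℕ) : ℝ :=
  ∑ j ∈ Icc h H, f j + C - ((H : ℝ) - h + 1) * lam

section LowerCostToGo

variable {f : ℕ → ℝ} {C lam : ℝ} {H h : ℕ}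

lemma lowerCostToGo_succ_eq_sum_Ioc :
    lowerCostToGo f C lam H (h + 1) = ∑ j ∈ Ioc h H, f j + C - ((H : ℝ) - h) * lam := by
  rw [lowerCostToGo, Icc_add_one_left_eq_Ioc]
  push_cast
  ring

lemma lowerCostToGo_succ (hh : h ≤ H) :
    lowerCostToGo f C lam H (h + 1) = lowerCostToGo f C lam H h + lam - f h := by
  rw [lowerCostToGo_succ_eq_sum_Ioc, lowerCostToGo, ← add_sum_Ioc_eq_sum_Icc hh]
  ring

lemma lowerCostToGo_one (hH : 1 ≤ H) (hlam : lam = (∑ j ∈ Icc 1 H, f j + C) / H) :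
    lowerCostToGo f C lam H 1 = 0 := by
  have hH0 : (H : ℝ) ≠ 0 := by positivity
  rw [lowerCostToGo, hlam]
  push_cast
  field_simp
  ring

lemma lowerCostToGo_succ_le (hf : MonotoneOn f (Set.Ici 1)) (hfH : f H ≤ lam) (hh : h ≤ H) :
    lowerCostToGo f C lam H (h + 1) ≤ C := by
  have htail : ∑ j ∈ Ioc h H, f j ≤ ((H : ℝ) - h) * lam :=
    sum_Ioc_le_mul_of_le hh fun j hj ↦ by
      obtain ⟨hhj, hjH⟩ := mem_Ioc.mp hj
      exact (hf (Set.mem_Ici.mpr (by omega)) (Set.mem_Ici.mpr (by omega)) hjH).trans hfH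
  rw [lowerCostToGo_succ_eq_sum_Ioc]
  linarith

end LowerCostToGo

theorem stmt3_general (f : ℕ → ℝ) (C : ℝ)
    (hmono : ∀ h, 1 ≤ h → f h ≤ f (h + 1))
    (H : ℕ) (hH : 1 ≤ H)
    (lam : ℝ) (hlam : lam = ((∑ j ∈ Finset.Icc 1 H, f j) + C) / H)
    (hth1 : f H ≤ lam) (hth2 : lam ≤ f (H + 1))
    (S : ℕ → ℝ)
    (hSlow : ∀ h, 1 ≤ h → h ≤ H →
      S h = (∑ j ∈ Finset.Icc h H, f j) + C - ((H : ℝ) - h + 1) * lam)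
    (hShigh : ∀ h, H ≤ h → S h = f h + C - lam) :
    S 1 = 0 ∧
    (∀ h, 1 ≤ h → S h ≤ S (h + 1)) ∧
    (∀ h, 1 ≤ h → S h = f h - lam + min C (S (h + 1))) ∧
    (∀ h, H ≤ h → C ≤ S (h + 1)) ∧
    (∀ h, 1 ≤ h → h < H → S (h + 1) ≤ C) := by
  have hf : MonotoneOn f (Set.Ici 1) := monotoneOn_nat_Ici_of_le_succ hmono
  have hlow : ∀ h, 1 ≤ h → h ≤ H → S h = lowerCostToGo f C lam H h := hSlow
  have hstep : ∀ h, 1 ≤ h → h < H → S (h + 1) = S h + lam - f h := fun h h1 hh ↦ by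
    rw [hlow h h1 hh.le, hlow (h + 1) (by omega) hh, lowerCostToGo_succ hh.le]
  have hgeC : ∀ h, H ≤ h → C ≤ S (h + 1) := fun h hh ↦ by
    have := hf (Set.mem_Ici.mpr (by omega)) (Set.mem_Ici.mpr (by omega)) (by omega : H + 1 ≤ h + 1)
    rw [hShigh (h + 1) (by omega)]
    linarith
  have hleC : ∀ h, 1 ≤ h → h < H → S (h + 1) ≤ C := fun h _ hh ↦ by
    rw [hlow (h + 1) (by omega) hh]
    exact lowerCostToGo_succ_le hf hth1 hh.le
  refine ⟨(hlow 1 le_rfl hH).trans (lowerCostToGo_one hH hlam), fun h h1 ↦ ?_, fun h h1 ↦ ?_,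
    hgeC, hleC⟩
  · rcases lt_or_ge h H with hh | hh
    · have := (hf h1 (Set.mem_Ici.mpr (by omega)) hh.le).trans hth1
      linarith [hstep h h1 hh]
    · rw [hShigh h hh, hShigh (h + 1) (by omega)]
      linarith [hmono h h1]
  · rcases lt_or_ge h H with hh | hh
    · rw [min_eq_right (hleC h h1 hh), hstep h h1 hh]
      ring
    · rw [min_eq_left (hgeC h hh), hShigh h hh]
      ring

/-- For the reliable-channel decoupled problem, if `H ≥ 1` satisfies
`f(H) ≤ λ ≤ f(H+1)` with `λ = (Σ_{j=1}^H f(j) + C)/H`, then the differential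
cost-to-go function `S` (as defined) satisfies `S 1 = 0`, is nondecreasing, solves the
average-cost Bellman equation `S h = f h − λ + min {C, S (h+1)}`, and the minimum is
attained by `C` for `h ≥ H` and by `S (h+1)` for `h < H`. -/
theorem stmt3 (f : ℕ → ℝ) (C : ℝ) (hC : 0 < C)
    (hpos : ∀ h, 1 ≤ h → 0 ≤ f h)
    (hmono : ∀ h, 1 ≤ h → f h ≤ f (h + 1))
    (H : ℕ) (hH : 1 ≤ H)
    (lam : ℝ) (hlam : lam = ((∑ j ∈ Finset.Icc 1 H, f j) + C) / H)
    (hth1 : f H ≤ lam) (hth2 : lam ≤ f (H + 1))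
    (S : ℕ → ℝ)
    (hSlow : ∀ h, 1 ≤ h → h ≤ H →
      S h = (∑ j ∈ Finset.Icc h H, f j) + C - ((H : ℝ) - h + 1) * lam)
    (hShigh : ∀ h, H ≤ h → S h = f h + C - lam) :
    S 1 = 0 ∧
    (∀ h, 1 ≤ h → S h ≤ S (h + 1)) ∧
    (∀ h, 1 ≤ h → S h = f h - lam + min C (S (h + 1))) ∧
    (∀ h, H ≤ h → C ≤ S (h + 1)) ∧
    (∀ h, 1 ≤ h → h < H → S (h + 1) ≤ C) :=
  stmt3_general f C hmono H hH lam hlam hth1 hth2 S hSlow hShigh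
end

section
/- Let f be a nonnegative, nondecreasing cost function on the positive integers and let C > 0. Suppose that h·f(h) − Σ_{j=1}^{h} f(j) < C for every h ≥ 1. Then: (i) f is bounded, so λ := lim_{h→∞} f(h) = sup_h f(h) exists and is finite; (ii) Σ_{j=1}^{∞} (λ − f(j)) ≤ C (in particular this series of nonnegative terms converges); and (iii) the function S(h) := C − Σ_{j=h}^{∞} (λ − f(j)) satisfies S(h) = f(h) − λ + S(h+1) and S(h) ≤ C for every h ≥ 1, so S solves the Bellman equation S(h) = f(h) − λ + min{C, S(h+1)} with the minimum always attained by S(h+1), i.e., the never-activate policy is optimal with average cost λ. -/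
/-! With `g n = f (n + 1)` monotone, `h f(h) − Σ_{j ≤ h} f(j) = Σ_{j < h} (f h − f (j + 1))` is a sum
of nonnegative gaps. The gap `f h − f 1` alone is already below `C`, so `f` increases to
`λ = sup f`; letting `h → ∞` in a fixed initial block of gaps bounds every partial sum of
`Σ (λ − f j)` by `C`. The Bellman recursion is splitting off the first term of the tail series,
and `S(h) ≤ C` because tails of a nonnegative series are nonnegative. -/

open Finset

theorem natCast_mul_sub_sum_Icc_eq_sum_range (f : ℕ → ℝ) (h : ℕ) :
    (h : ℝ) * f h - ∑ j ∈ Icc 1 h, f j = ∑ j ∈ range h, (f h - f (j + 1)) := by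
  rw [range_eq_Ico, sum_Ico_add' (fun j => f h - f j), zero_add, Ico_add_one_right_eq_Icc,
    sum_sub_distrib, sum_const, Nat.card_Icc, add_tsub_cancel_right, nsmul_eq_mul]

theorem tsum_nat_add_eq_add_tsum_succ {G : Type*} [AddCommGroup G] [TopologicalSpace G]
    [IsTopologicalAddGroup G] [T2Space G] {u : ℕ → G} (hu : Summable u) (h : ℕ) :
    ∑' j, u (h + j) = u h + ∑' j, u (h + 1 + j) := by
  have hs : Summable fun j => u (h + j) := by
    simpa only [add_comm _ h] using (summable_nat_add_iff h).2 hu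
  rw [hs.tsum_eq_zero_add]
  simp only [add_zero, add_assoc, add_comm 1]

section Deficit

variable {g : ℕ → ℝ} {C : ℝ} (hg : Monotone g)
  (hdef : ∀ n, ∑ j ∈ range (n + 1), (g n - g j) ≤ C)
include hg hdef

theorem Monotone.sum_range_sub_le_of_le {m n : ℕ} (hmn : n ≤ m + 1) :
    ∑ j ∈ range n, (g m - g j) ≤ C :=
  (sum_le_sum_of_subset_of_nonneg (range_subset_range.2 hmn) fun _ hj _ =>
    sub_nonneg.2 (hg (Nat.lt_succ_iff.1 (mem_range.1 hj)))).trans (hdef m)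

theorem Monotone.bddAbove_range_of_sum_sub_le : BddAbove (Set.range g) := by
  refine ⟨g 0 + C, Set.forall_mem_range.2 fun n => ?_⟩
  have := hg.sum_range_sub_le_of_le hdef (n := 1) (m := n) (by omega)
  simp only [sum_range_one] at this
  linarith

theorem Monotone.sum_range_ciSup_sub_le (n : ℕ) : ∑ j ∈ range n, ((⨆ i, g i) - g j) ≤ C := by
  have hlim := tendsto_atTop_ciSup hg (hg.bddAbove_range_of_sum_sub_le hdef)
  refine _root_.le_of_tendsto (tendsto_finsetSum _ fun j _ => hlim.sub_const (g j)) ?_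
  filter_upwards [Filter.eventually_ge_atTop n] with m hm
  exact hg.sum_range_sub_le_of_le hdef (by omega)

theorem Monotone.summable_ciSup_sub : Summable fun j => (⨆ i, g i) - g j :=
  summable_of_sum_range_le
    (fun j => sub_nonneg.2 (le_ciSup (hg.bddAbove_range_of_sum_sub_le hdef) j))
    (hg.sum_range_ciSup_sub_le hdef)

theorem Monotone.tsum_ciSup_sub_le : ∑' j, ((⨆ i, g i) - g j) ≤ C :=
  (hg.summable_ciSup_sub hdef).tsum_le_of_sum_range_le (hg.sum_range_ciSup_sub_le hdef)

end Deficit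

theorem stmt4_general (f : ℕ → ℝ) (C : ℝ)
    (hmono : ∀ h, 1 ≤ h → f h ≤ f (h + 1))
    (hlt : ∀ h : ℕ, 1 ≤ h → (h : ℝ) * f h - ∑ j ∈ Finset.Icc 1 h, f j < C) :
    ∃ lam : ℝ,
      Filter.Tendsto (fun h => f h) Filter.atTop (nhds lam) ∧
      (∀ h, 1 ≤ h → f h ≤ lam) ∧
      Summable (fun j : ℕ => lam - f (j + 1)) ∧
      (∑' j : ℕ, (lam - f (j + 1))) ≤ C ∧
      (∀ h, 1 ≤ h →
        (C - ∑' j : ℕ, (lam - f (h + j))) =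
          f h - lam + (C - ∑' j : ℕ, (lam - f (h + 1 + j))) ∧
        (C - ∑' j : ℕ, (lam - f (h + j))) ≤ C ∧
        (C - ∑' j : ℕ, (lam - f (h + j))) =
          f h - lam + min C (C - ∑' j : ℕ, (lam - f (h + 1 + j)))) := by
  set g : ℕ → ℝ := fun n => f (n + 1)
  have hg : Monotone g := monotone_nat_of_le_succ fun n => hmono (n + 1) n.succ_pos
  have hdef : ∀ n, ∑ j ∈ range (n + 1), (g n - g j) ≤ C := fun n => by
    simpa only [natCast_mul_sub_sum_Icc_eq_sum_range] using (hlt (n + 1) n.succ_pos).le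
  have hbdd := hg.bddAbove_range_of_sum_sub_le hdef
  set lam := ⨆ n, g n
  have hle : ∀ h, 1 ≤ h → f h ≤ lam := fun h hh => by
    obtain ⟨n, rfl⟩ := Nat.exists_eq_add_of_le' hh
    exact le_ciSup hbdd n
  have hsum : Summable fun j => lam - f j :=
    (summable_nat_add_iff 1).1 (hg.summable_ciSup_sub hdef)
  refine ⟨lam, (Filter.tendsto_add_atTop_iff_nat 1).1 (tendsto_atTop_ciSup hg hbdd), hle,
    hg.summable_ciSup_sub hdef, hg.tsum_ciSup_sub_le hdef, fun h hh => ?_⟩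
  have hrec := tsum_nat_add_eq_add_tsum_succ hsum h
  have htail : 0 ≤ ∑' j, (lam - f (h + 1 + j)) :=
    tsum_nonneg fun j => sub_nonneg.2 (hle _ (by omega))
  refine ⟨by rw [hrec]; ring, by linarith [hle h hh], ?_⟩
  rw [min_eq_right (by linarith), hrec]
  ring

/-- If `h·f(h) − Σ_{j=1}^h f(j) < C` for all `h ≥ 1`, then `f` converges to
a finite limit `λ = sup f`, the series `Σ_{j=1}^∞ (λ − f(j))` converges with sum `≤ C`,
and `S(h) = C − Σ_{j=h}^∞ (λ − f(j))` satisfies `S(h) = f(h) − λ + S(h+1)` and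
`S(h) ≤ C`, hence solves the Bellman equation `S h = f h − λ + min {C, S (h+1)}` with the
minimum always attained by `S(h+1)` (never-activate is optimal with average cost λ). -/
theorem stmt4 (f : ℕ → ℝ) (C : ℝ) (hC : 0 < C)
    (hpos : ∀ h, 1 ≤ h → 0 ≤ f h)
    (hmono : ∀ h, 1 ≤ h → f h ≤ f (h + 1))
    (hlt : ∀ h : ℕ, 1 ≤ h → (h : ℝ) * f h - ∑ j ∈ Finset.Icc 1 h, f j < C) :
    ∃ lam : ℝ,
      Filter.Tendsto (fun h => f h) Filter.atTop (nhds lam) ∧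
      (∀ h, 1 ≤ h → f h ≤ lam) ∧
      Summable (fun j : ℕ => lam - f (j + 1)) ∧
      (∑' j : ℕ, (lam - f (j + 1))) ≤ C ∧
      (∀ h, 1 ≤ h →
        (C - ∑' j : ℕ, (lam - f (h + j))) =
          f h - lam + (C - ∑' j : ℕ, (lam - f (h + 1 + j))) ∧
        (C - ∑' j : ℕ, (lam - f (h + j))) ≤ C ∧
        (C - ∑' j : ℕ, (lam - f (h + j))) =
          f h - lam + min C (C - ∑' j : ℕ, (lam - f (h + 1 + j)))) :=
  stmt4_general f C hmono hlt
end

section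
/- Let F_1, F_2 : ℤ⁺ → ℝ be nondecreasing with F_1(1) ≥ F_2(1), let π(a, b) = 1 if F_1(a) ≥ F_2(b) and π(a, b) = 2 otherwise, and let T : (ℤ⁺)² → (ℤ⁺)² be the reliable-channel closed-loop dynamics T(a, b) = (1, b+1) if π(a, b) = 1 and T(a, b) = (a+1, 1) if π(a, b) = 2. Suppose k is the least positive integer with F_2(k) > F_1(1) (necessarily k ≥ 2). Then the orbit of the state (1, 2) under T is periodic with period k: T^k(1, 2) = (1, 2), and the cycle consists of scheduling source 1 for k − 1 consecutive slots followed by source 2 once. Hence every two-source index policy induces a cyclic schedule of this form. -/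
/-!
From `(1, b)`, source 1 stays scheduled (at age 1) for as long as `F₂` of source 2's growing age
is at most `F₁ 1`. By minimality of `k` this lasts until source 2 reaches age `k`; source 2 is then
served once, and from `(2, 1)` source 1 wins again since `F₂ 1 ≤ F₁ 1 ≤ F₁ 2`, closing the cycle
at `(1, 2)`.
-/

theorem iterate_eq_of_forall_le_index_one {F₁ F₂ : ℕ → ℝ} {T : ℕ × ℕ → ℕ × ℕ}
    (hT : ∀ s : ℕ × ℕ, T s = if F₂ s.2 ≤ F₁ s.1 then (1, s.2 + 1) else (s.1 + 1, 1))
    {b t : ℕ} (h : ∀ j < t, F₂ (b + j) ≤ F₁ 1) : T^[t] (1, b) = (1, b + t) := by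
  induction t with
  | zero => rfl
  | succ t ih =>
    rw [Function.iterate_succ_apply', ih fun j hj => h j (by omega), hT,
      if_pos (h t t.lt_succ_self)]
    rfl

theorem stmt9_general (F₁ F₂ : ℕ → ℝ)
    (h₁ : ∀ n, 1 ≤ n → F₁ n ≤ F₁ (n + 1))
    (hinit : F₂ 1 ≤ F₁ 1)
    (T : ℕ × ℕ → ℕ × ℕ)
    (hT : ∀ s : ℕ × ℕ, T s = if F₂ s.2 ≤ F₁ s.1 then (1, s.2 + 1) else (s.1 + 1, 1))
    (k : ℕ) (hk1 : 1 ≤ k) (hk2 : F₁ 1 < F₂ k)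
    (hkmin : ∀ m, 1 ≤ m → F₁ 1 < F₂ m → k ≤ m) :
    2 ≤ k ∧
    T^[k] (1, 2) = (1, 2) ∧
    (∀ t, t < k → t ≠ k - 2 →
      F₂ (T^[t] (1, 2)).2 ≤ F₁ (T^[t] (1, 2)).1) ∧
    ¬ F₂ (T^[k - 2] (1, 2)).2 ≤ F₁ (T^[k - 2] (1, 2)).1 := by
  have hsmall : ∀ m, 1 ≤ m → m < k → F₂ m ≤ F₁ 1 := fun m hm hmk =>
    not_lt.1 fun h => (hkmin m hm h).not_gt hmk
  have hk : 2 ≤ k := by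
    by_contra! h
    obtain rfl : k = 1 := by omega
    exact hk2.not_ge hinit
  have hclimb : ∀ t ≤ k - 2, T^[t] (1, 2) = (1, 2 + t) := fun t ht =>
    iterate_eq_of_forall_le_index_one hT fun j hj => hsmall _ (by omega) (by omega)
  have hlast : T^[k - 2] (1, 2) = (1, k) := by
    rw [hclimb _ le_rfl, show 2 + (k - 2) = k by omega]
  have hswitch : T^[k - 1] (1, 2) = (2, 1) := by
    rw [show k - 1 = k - 2 + 1 by omega, Function.iterate_succ_apply', hlast, hT,
      if_neg hk2.not_ge]
  have hreturn : F₂ 1 ≤ F₁ 2 := hinit.trans (h₁ 1 le_rfl)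
  refine ⟨hk, ?_, ?_, ?_⟩
  · rw [show k = k - 1 + 1 by omega, Function.iterate_succ_apply', hswitch, hT, if_pos hreturn]
  · intro t htk htne
    obtain ht | rfl : t < k - 2 ∨ t = k - 1 := by omega
    · rw [hclimb t ht.le]
      exact hsmall _ (by omega) (by omega)
    · rwa [hswitch]
  · rw [hlast]
    exact hk2.not_ge

/-- For the two-source index policy with nondecreasing index functions
`F₁, F₂` (on the positive integers), `F₁ 1 ≥ F₂ 1`, and reliable-channel closed-loop
dynamics `T`, if `k` is the least positive integer with `F₂ k > F₁ 1` then `k ≥ 2`, the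
orbit of `(1,2)` is periodic with period `k` (`T^[k] (1,2) = (1,2)`), and along the
cycle source 1 is scheduled in every slot except slot `k−2`, where source 2 is scheduled
(source 1 for `k−1` slots, source 2 once). Source 1 is scheduled in state `(a,b)` iff
`F₂ b ≤ F₁ a`. -/
theorem stmt9 (F₁ F₂ : ℕ → ℝ)
    (h₁ : ∀ n, 1 ≤ n → F₁ n ≤ F₁ (n + 1))
    (h₂ : ∀ n, 1 ≤ n → F₂ n ≤ F₂ (n + 1))
    (hinit : F₂ 1 ≤ F₁ 1)
    (T : ℕ × ℕ → ℕ × ℕ)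
    (hT : ∀ s : ℕ × ℕ, T s = if F₂ s.2 ≤ F₁ s.1 then (1, s.2 + 1) else (s.1 + 1, 1))
    (k : ℕ) (hk1 : 1 ≤ k) (hk2 : F₁ 1 < F₂ k)
    (hkmin : ∀ m, 1 ≤ m → F₁ 1 < F₂ m → k ≤ m) :
    2 ≤ k ∧
    T^[k] (1, 2) = (1, 2) ∧
    (∀ t, t < k → t ≠ k - 2 →
      F₂ (T^[t] (1, 2)).2 ≤ F₁ (T^[t] (1, 2)).1) ∧
    ¬ F₂ (T^[k - 2] (1, 2)).2 ≤ F₁ (T^[k - 2] (1, 2)).1 :=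
  stmt9_general F₁ F₂ h₁ hinit T hT k hk1 hk2 hkmin
end

section
/- Let f_1, f_2 : ℤ⁺ → ℝ and for each integer m ≥ 1 let C(m) := (m·f_1(1) + f_1(2) + Σ_{j=1}^{m+1} f_2(j)) / (m + 1) be the average cost of the cyclic schedule that serves source 1 in m consecutive slots and then source 2 once. Then for every k ≥ 1: C(k) ≤ C(k+1) if and only if W_1(1) ≤ W_2(k+1), and C(k) < C(k+1) if and only if W_1(1) < W_2(k+1), where W_i(h) := h·f_i(h+1) − Σ_{j=1}^{h} f_i(j) is the Whittle index of source i. In particular, comparing consecutive cycle lengths is equivalent to the Whittle index comparison, which yields the optimality of the Whittle index policy for two sources with reliable channels. -/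
/-!
Clearing denominators, the increment `C (m + 1) - C m` equals
`(W₂ (m + 1) - W₁ 1) / ((m + 1) (m + 2))` for every `m`; the denominator is positive, so the
sign of the increment is that of the index difference.
-/

open Finset

noncomputable section

namespace TwoSourceCyclic

def cyclicCost (f₁ f₂ : ℕ → ℝ) (m : ℕ) : ℝ :=
  ((m : ℝ) * f₁ 1 + f₁ 2 + ∑ j ∈ Icc 1 (m + 1), f₂ j) / ((m : ℝ) + 1)

def whittleIndex (f : ℕ → ℝ) (h : ℕ) : ℝ :=
  (h : ℝ) * f (h + 1) - ∑ j ∈ Icc 1 h, f j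

variable (f₁ f₂ : ℕ → ℝ) (m : ℕ)

theorem cyclicCost_succ_sub :
    cyclicCost f₁ f₂ (m + 1) - cyclicCost f₁ f₂ m =
      (whittleIndex f₂ (m + 1) - whittleIndex f₁ 1) / (((m : ℝ) + 1) * ((m : ℝ) + 2)) := by
  have hm₁ : (m : ℝ) + 1 ≠ 0 := by positivity
  have hm₂ : (m : ℝ) + 2 ≠ 0 := by positivity
  simp only [cyclicCost, whittleIndex, sum_Icc_succ_top (show 1 ≤ m + 1 + 1 by omega),
    Icc_self, sum_singleton]
  push_cast
  field_simp
  ring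

theorem cyclicCost_le_succ_iff :
    cyclicCost f₁ f₂ m ≤ cyclicCost f₁ f₂ (m + 1) ↔ whittleIndex f₁ 1 ≤ whittleIndex f₂ (m + 1) := by
  rw [← sub_nonneg, cyclicCost_succ_sub, le_div_iff₀ (by positivity), zero_mul, sub_nonneg]

theorem cyclicCost_lt_succ_iff :
    cyclicCost f₁ f₂ m < cyclicCost f₁ f₂ (m + 1) ↔ whittleIndex f₁ 1 < whittleIndex f₂ (m + 1) := by
  rw [← sub_pos, cyclicCost_succ_sub, div_pos_iff_of_pos_right (by positivity), sub_pos]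

end TwoSourceCyclic

end

open TwoSourceCyclic in
/-- For two sources with reliable channels, letting `C m` be the average
cost of the cyclic schedule serving source 1 for `m` slots then source 2 once, and
`W_i h = h·f_i(h+1) − Σ_{j=1}^h f_i(j)` the Whittle indices, for every `k ≥ 1`:
`C k ≤ C (k+1)` iff `W₁ 1 ≤ W₂ (k+1)`, and `C k < C (k+1)` iff `W₁ 1 < W₂ (k+1)`. -/
theorem stmt10 (f₁ f₂ : ℕ → ℝ)
    (C : ℕ → ℝ)
    (hC : ∀ m, 1 ≤ m → C m =
      ((m : ℝ) * f₁ 1 + f₁ 2 + ∑ j ∈ Finset.Icc 1 (m + 1), f₂ j) / ((m : ℝ) + 1))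
    (W₁ W₂ : ℕ → ℝ)
    (hW₁ : ∀ h, W₁ h = (h : ℝ) * f₁ (h + 1) - ∑ j ∈ Finset.Icc 1 h, f₁ j)
    (hW₂ : ∀ h, W₂ h = (h : ℝ) * f₂ (h + 1) - ∑ j ∈ Finset.Icc 1 h, f₂ j) :
    ∀ k, 1 ≤ k →
      (C k ≤ C (k + 1) ↔ W₁ 1 ≤ W₂ (k + 1)) ∧
      (C k < C (k + 1) ↔ W₁ 1 < W₂ (k + 1)) := by
  intro k hk
  have hCk : C k = cyclicCost f₁ f₂ k := hC k hk
  have hCk' : C (k + 1) = cyclicCost f₁ f₂ (k + 1) := by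
    rw [hC (k + 1) (by omega), cyclicCost]
  obtain rfl : W₁ = whittleIndex f₁ := funext hW₁
  obtain rfl : W₂ = whittleIndex f₂ := funext hW₂
  rw [hCk, hCk']
  exact ⟨cyclicCost_le_succ_iff f₁ f₂ k, cyclicCost_lt_succ_iff f₁ f₂ k⟩
end

section
/- Let 0 < p < 1 and let f : ℤ⁺ → ℝ be a nonnegative, nondecreasing cost function with Σ_{h=1}^{∞} f(h)(1−p)^h < ∞. Define W_p(h) := p²(h−1)·Σ_{k=h}^{∞} f(k)(1−p)^{k−h} − p·Σ_{j=1}^{h−1} f(j) for h ≥ 1, so that W_p(1) = 0 and W_p is nondecreasing. For each activation charge C > 0 such that W_p(h) ≥ C for some h, define H(C) to be the least positive integer H with W_p(H+1) ≥ C. Then: (i) W_p(H(C)) ≤ C ≤ W_p(H(C)+1), so H(C) satisfies the unreliable-channel threshold optimality condition; and (ii) H is nondecreasing in C: if 0 < C₁ ≤ C₂ and both H(C₁) and H(C₂) are defined, then H(C₁) ≤ H(C₂). Consequently the set of states {h : h ≥ H(C)} in which activation is optimal decreases monotonically as C increases (indexability of the decoupled problem with unreliable channel). -/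
/-! The proof hinges on the increment identity
`W_p(h+1) - W_p(h) = p (1 + (h-1) p) (p T(h+1) - f(h))`, where `T(h) = Σ_k f(h+k)(1-p)^k`
satisfies `T(h) = f(h) + (1-p) T(h+1)`. Since `f` is nondecreasing, `T(h+1)` dominates the
geometric series `f(h) Σ_k (1-p)^k = f(h)/p`, so every increment is nonnegative. -/

open Finset

noncomputable section

def discountedTail (f : ℕ → ℝ) (q : ℝ) (h : ℕ) : ℝ := ∑' k, f (h + k) * q ^ k

-- The paper's `W_p`; only meaningful for `h ≥ 1` (`h - 1` truncates), hence the shifts below.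
def whittleIndex (p : ℝ) (f : ℕ → ℝ) (h : ℕ) : ℝ :=
  p ^ 2 * ((h : ℝ) - 1) * discountedTail f (1 - p) h - p * ∑ j ∈ Icc 1 (h - 1), f j

def thresholdSet (W : ℕ → ℝ) (C : ℝ) : Set ℕ := {H | 1 ≤ H ∧ C ≤ W (H + 1)}

end

section Tail

variable {f : ℕ → ℝ} {q : ℝ} {h : ℕ}

theorem summable_discountedTail (hq : q ≠ 0)
    (hf : Summable fun n : ℕ => f (n + 1) * q ^ (n + 1)) (h : ℕ) :
    Summable fun k : ℕ => f (h + k) * q ^ k := by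
  have hshift : Summable fun n : ℕ => f (n + h) * q ^ (n + h) :=
    (summable_nat_add_iff h).mpr ((summable_nat_add_iff (f := fun n => f n * q ^ n) 1).mp hf)
  refine (hshift.mul_right (q ^ h)⁻¹).congr fun k => ?_
  rw [add_comm k h, pow_add, mul_comm (q ^ h), ← mul_assoc, mul_assoc,
    mul_inv_cancel₀ (pow_ne_zero h hq), mul_one]

theorem discountedTail_eq_add (hs : Summable fun k : ℕ => f (h + k) * q ^ k) :
    discountedTail f q h = f h + q * discountedTail f q (h + 1) := by
  rw [discountedTail, hs.tsum_eq_zero_add, discountedTail, ← tsum_mul_left]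
  simp only [add_zero, pow_zero, mul_one, pow_succ]
  congr 1
  exact tsum_congr fun k => by rw [← add_assoc, add_right_comm]; ring

theorem le_mul_discountedTail {p c : ℝ} (hp0 : 0 < p) (hp1 : p < 1)
    (hs : Summable fun k : ℕ => f (h + k) * (1 - p) ^ k) (hc : ∀ k, c ≤ f (h + k)) :
    c ≤ p * discountedTail f (1 - p) h := by
  have hgeom : ∑' k : ℕ, c * (1 - p) ^ k = c / p := by
    rw [tsum_mul_left, tsum_geometric_of_lt_one (by linarith) (by linarith), sub_sub_cancel,
      div_eq_mul_inv]
  have hle : c / p ≤ discountedTail f (1 - p) h := by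
    rw [← hgeom]
    refine Summable.tsum_le_tsum (fun k => ?_)
      ((summable_geometric_of_lt_one (by linarith) (by linarith)).mul_left c) hs
    exact mul_le_mul_of_nonneg_right (hc k) (pow_nonneg (by linarith) k)
  rwa [div_le_iff₀' hp0] at hle

end Tail

section Index

variable {p : ℝ} {f : ℕ → ℝ} {h : ℕ}

theorem whittleIndex_one : whittleIndex p f 1 = 0 := by
  simp [whittleIndex]

theorem whittleIndex_succ_sub (hs : Summable fun k : ℕ => f (h + 1 + k) * (1 - p) ^ k) :
    whittleIndex p f (h + 2) - whittleIndex p f (h + 1) =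
      p * (1 + h * p) * (p * discountedTail f (1 - p) (h + 2) - f (h + 1)) := by
  rw [whittleIndex, whittleIndex, discountedTail_eq_add hs, show h + 2 - 1 = h + 1 by omega,
    Nat.add_sub_cancel, sum_Icc_succ_top (by omega)]
  push_cast
  ring

theorem whittleIndex_le_succ (hp0 : 0 < p) (hp1 : p < 1)
    (hs : ∀ h, Summable fun k : ℕ => f (h + k) * (1 - p) ^ k)
    (hmono : MonotoneOn f (Set.Ici 1)) (h : ℕ) :
    whittleIndex p f (h + 1) ≤ whittleIndex p f (h + 2) := by
  have hf : f (h + 1) ≤ p * discountedTail f (1 - p) (h + 2) :=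
    le_mul_discountedTail hp0 hp1 (hs _) fun k =>
      hmono (by simp) (by simp only [Set.mem_Ici]; omega) (by omega)
  have hincr := whittleIndex_succ_sub (p := p) (hs (h + 1))
  have hfactor : 0 ≤ p * (1 + h * p) := by positivity
  linarith [mul_nonneg hfactor (sub_nonneg.mpr hf)]

end Index

section Threshold

variable {W : ℕ → ℝ} {C : ℝ} {H : ℕ}

theorem le_of_isLeast_thresholdSet (h1 : W 1 ≤ C) (hH : IsLeast (thresholdSet W C) H) :
    W H ≤ C ∧ C ≤ W (H + 1) := by
  obtain ⟨⟨hH1, hHC⟩, hmin⟩ := hH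
  refine ⟨?_, hHC⟩
  obtain ⟨m, rfl⟩ : ∃ m, H = m + 1 := ⟨H - 1, by omega⟩
  rcases Nat.eq_zero_or_pos m with rfl | hm
  · exact h1
  · by_contra! hlt
    have := hmin ⟨hm, hlt.le⟩
    omega

theorem isLeast_thresholdSet_mono {C₁ C₂ : ℝ} {H₁ H₂ : ℕ} (hC : C₁ ≤ C₂)
    (h₁ : IsLeast (thresholdSet W C₁) H₁) (h₂ : IsLeast (thresholdSet W C₂) H₂) : H₁ ≤ H₂ :=
  h₁.2 ⟨h₂.1.1, hC.trans h₂.1.2⟩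

end Threshold

theorem stmt17_general (p : ℝ) (hp0 : 0 < p) (hp1 : p < 1)
    (f : ℕ → ℝ)
    (hmono : ∀ h, 1 ≤ h → f h ≤ f (h + 1))
    (hbc : Summable (fun h : ℕ => f (h + 1) * (1 - p) ^ (h + 1)))
    (Wp : ℕ → ℝ)
    (hWp : ∀ h, 1 ≤ h →
      Wp h = p ^ 2 * ((h : ℝ) - 1) * (∑' k : ℕ, f (h + k) * (1 - p) ^ k)
        - p * ∑ j ∈ Finset.Icc 1 (h - 1), f j) :
    Wp 1 = 0 ∧
    (∀ h, 1 ≤ h → Wp h ≤ Wp (h + 1)) ∧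
    (∀ C : ℝ, 0 < C → (∃ h, 1 ≤ h ∧ C ≤ Wp h) → ∀ H : ℕ,
      IsLeast {H' : ℕ | 1 ≤ H' ∧ C ≤ Wp (H' + 1)} H →
      Wp H ≤ C ∧ C ≤ Wp (H + 1)) ∧
    (∀ C₁ C₂ : ℝ, ∀ H₁ H₂ : ℕ, 0 < C₁ → C₁ ≤ C₂ →
      IsLeast {H' : ℕ | 1 ≤ H' ∧ C₁ ≤ Wp (H' + 1)} H₁ →
      IsLeast {H' : ℕ | 1 ≤ H' ∧ C₂ ≤ Wp (H' + 1)} H₂ →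
      H₁ ≤ H₂) := by
  have hW : ∀ h, 1 ≤ h → Wp h = whittleIndex p f h := hWp
  have hW1 : Wp 1 = 0 := (hW 1 le_rfl).trans whittleIndex_one
  have hs := summable_discountedTail (by linarith : 1 - p ≠ 0) hbc
  refine ⟨hW1, fun h hh => ?_, fun C hC _ H hH => ?_, fun C₁ C₂ H₁ H₂ _ hC => ?_⟩
  · obtain ⟨m, rfl⟩ : ∃ m, h = m + 1 := ⟨h - 1, by omega⟩
    rw [hW _ hh, hW _ (by omega)]
    exact whittleIndex_le_succ hp0 hp1 hs (monotoneOn_nat_Ici_of_le_succ hmono) m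
  · exact le_of_isLeast_thresholdSet (hW1.trans_le hC.le) hH
  · exact isLeast_thresholdSet_mono hC

/-- Indexability for the unreliable channel. With
`W_p h = p²(h−1)·Σ_{k=h}^∞ f(k)(1−p)^{k−h} − p·Σ_{j=1}^{h−1} f(j)`, we have `W_p 1 = 0`,
`W_p` is nondecreasing, and whenever `H(C)` is the least positive integer `H` with
`W_p (H+1) ≥ C` (for `C > 0` such that it is defined), `W_p (H(C)) ≤ C ≤ W_p (H(C)+1)`
and `H(C)` is nondecreasing in `C`. -/
theorem stmt17 (p : ℝ) (hp0 : 0 < p) (hp1 : p < 1)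
    (f : ℕ → ℝ)
    (hpos : ∀ h, 1 ≤ h → 0 ≤ f h)
    (hmono : ∀ h, 1 ≤ h → f h ≤ f (h + 1))
    (hbc : Summable (fun h : ℕ => f (h + 1) * (1 - p) ^ (h + 1)))
    (Wp : ℕ → ℝ)
    (hWp : ∀ h, 1 ≤ h →
      Wp h = p ^ 2 * ((h : ℝ) - 1) * (∑' k : ℕ, f (h + k) * (1 - p) ^ k)
        - p * ∑ j ∈ Finset.Icc 1 (h - 1), f j) :
    Wp 1 = 0 ∧
    (∀ h, 1 ≤ h → Wp h ≤ Wp (h + 1)) ∧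
    (∀ C : ℝ, 0 < C → (∃ h, 1 ≤ h ∧ C ≤ Wp h) → ∀ H : ℕ,
      IsLeast {H' : ℕ | 1 ≤ H' ∧ C ≤ Wp (H' + 1)} H →
      Wp H ≤ C ∧ C ≤ Wp (H + 1)) ∧
    (∀ C₁ C₂ : ℝ, ∀ H₁ H₂ : ℕ, 0 < C₁ → C₁ ≤ C₂ →
      IsLeast {H' : ℕ | 1 ≤ H' ∧ C₁ ≤ Wp (H' + 1)} H₁ →
      IsLeast {H' : ℕ | 1 ≤ H' ∧ C₂ ≤ Wp (H' + 1)} H₂ →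
      H₁ ≤ H₂) :=
  stmt17_general p hp0 hp1 f hmono hbc Wp hWp
end

section
/- Let w > 0, 0 < p < 1, and let A be a positive integer. Then the unreliable-channel Whittle index of the linear cost function f(x) = w·x evaluates in closed form: p²·A·Σ_{k=1}^{∞} w·(k+A)·(1−p)^{k−1} − p·Σ_{j=1}^{A} w·j = (w·p·A/2)·(A + (1 + (1−p))/(1 − (1−p))) = (w·p·A/2)·(A + (2−p)/p). -/
/-! Both series are geometric-type: `∑ (k + 1 + A) q^k` splits into `∑ k q^k = q/(1-q)²` and
`(1 + A) ∑ q^k = (1 + A)/(1-q)` with `q = 1 - p`, and the finite sum is Gauss's `A(A+1)/2`;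
the closed form is then a rational-function identity in `p`. -/

theorem hasSum_add_const_mul_geometric_of_norm_lt_one {𝕜 : Type*} [NormedField 𝕜]
    [CompleteSpace 𝕜] (c : 𝕜) {r : 𝕜} (hr : ‖r‖ < 1) :
    HasSum (fun n : ℕ ↦ (n + c) * r ^ n) (r / (1 - r) ^ 2 + c / (1 - r)) := by
  have hgeom := (hasSum_geometric_of_norm_lt_one hr).mul_left c
  simp only [← div_eq_mul_inv] at hgeom
  simpa only [add_mul] using (hasSum_coe_mul_geometric_of_norm_lt_one hr).add hgeom

theorem Finset.sum_Icc_one_id_mul_two (n : ℕ) : (∑ j ∈ Finset.Icc 1 n, j) * 2 = n * (n + 1) := by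
  induction n with
  | zero => simp
  | succ n ih =>
    rw [Finset.sum_Icc_succ_top (by omega), add_mul, ih]
    ring

theorem stmt18_general (w p : ℝ) (hp0 : 0 < p) (hp1 : p < 1)
    (A : ℕ) :
    p ^ 2 * (A : ℝ) * (∑' k : ℕ, w * ((k : ℝ) + 1 + (A : ℝ)) * (1 - p) ^ k)
        - p * ∑ j ∈ Finset.Icc 1 A, w * (j : ℝ) =
      w * p * (A : ℝ) / 2 * ((A : ℝ) + (1 + (1 - p)) / (1 - (1 - p))) ∧
    w * p * (A : ℝ) / 2 * ((A : ℝ) + (1 + (1 - p)) / (1 - (1 - p))) =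
      w * p * (A : ℝ) / 2 * ((A : ℝ) + (2 - p) / p) := by
  have hq : ‖1 - p‖ < 1 := by
    rw [Real.norm_eq_abs, abs_lt]
    constructor <;> linarith
  have hseries : ∑' k : ℕ, w * ((k : ℝ) + 1 + A) * (1 - p) ^ k
      = w * ((1 - p) / p ^ 2 + (1 + A) / p) := by
    have h := (hasSum_add_const_mul_geometric_of_norm_lt_one (1 + (A : ℝ)) hq).mul_left w
    simp only [sub_sub_cancel, ← mul_assoc, ← add_assoc] at h
    exact h.tsum_eq
  have hgauss : ∑ j ∈ Finset.Icc 1 A, w * (j : ℝ) = w * (A * (A + 1) / 2) := by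
    have h : ((∑ j ∈ Finset.Icc 1 A, j : ℕ) : ℝ) * 2 = A * (A + 1) := by
      exact_mod_cast Finset.sum_Icc_one_id_mul_two A
    rw [← Finset.mul_sum, ← Nat.cast_sum, ← h]
    ring
  rw [hseries, hgauss, sub_sub_cancel, show (1 : ℝ) + (1 - p) = 2 - p by ring]
  refine ⟨?_, rfl⟩
  field_simp
  ring

/-- Closed form of the unreliable-channel Whittle index for the linear
cost function `f x = w·x`:
`p²·A·Σ_{k=1}^∞ w(k+A)(1−p)^{k−1} − p·Σ_{j=1}^A w·j
  = (w·p·A/2)·(A + (1+(1−p))/(1−(1−p))) = (w·p·A/2)·(A + (2−p)/p)`. -/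
theorem stmt18 (w p : ℝ) (hw : 0 < w) (hp0 : 0 < p) (hp1 : p < 1)
    (A : ℕ) (hA : 1 ≤ A) :
    p ^ 2 * (A : ℝ) * (∑' k : ℕ, w * ((k : ℝ) + 1 + (A : ℝ)) * (1 - p) ^ k)
        - p * ∑ j ∈ Finset.Icc 1 A, w * (j : ℝ) =
      w * p * (A : ℝ) / 2 * ((A : ℝ) + (1 + (1 - p)) / (1 - (1 - p))) ∧
    w * p * (A : ℝ) / 2 * ((A : ℝ) + (1 + (1 - p)) / (1 - (1 - p))) =
      w * p * (A : ℝ) / 2 * ((A : ℝ) + (2 - p) / p) :=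
  stmt18_general w p hp0 hp1 A
end

section
/- Let 0 < p ≤ 1, let f : ℤ⁺ → ℝ be a nonnegative, nondecreasing cost function with Σ_{h=1}^{∞} f(h)(1−p)^h < ∞, and let C > 0. Suppose that for every h ≥ 1, p²·h·Σ_{k=1}^{∞} f(k+h)(1−p)^{k−1} − p·Σ_{j=1}^{h} f(j) < C. Then: (i) f is bounded, so λ := lim_{h→∞} f(h) = sup_h f(h) exists and is finite; (ii) Σ_{j=1}^{∞} (λ − f(j)) ≤ C/p (in particular this series of nonnegative terms converges); and (iii) the function S(h) := C − Σ_{j=h}^{∞} (λ − f(j)) satisfies S(h) = f(h) − λ + S(h+1) and S(h) ≤ C for every h ≥ 1, so S solves the Bellman equation S(h) = f(h) − λ + min{C + (1−p)·S(h+1), S(h+1)} with the minimum always attained by S(h+1), i.e., the never-activate policy is optimal with average cost λ. -/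
/-!
Since `f` is nondecreasing, the discounted tail `Σₖ f(k+1+h)(1−p)^k` is at least `f(h+1)/p`, so the
index bound turns into `Σ_{j ≤ h} (f(h+1) − f(j)) ≤ C/p` for every `h`. Taking `j = 1` bounds `f`;
letting `h → ∞` with the range of `j` fixed bounds every partial sum of `Σ_j (λ − f(j))` by `C/p`.
The tails `Σ_{j ≥ h} (λ − f(j))` are then nonnegative, so `S h ≤ C`, and `S h = f h − λ + S (h+1)`
is the telescoping of those tails. Finally `p · S (h+1) ≤ C` makes the passive branch
`S (h+1)` the smaller one in the Bellman minimum.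
-/

open Finset Filter Topology

lemma summable_shift_mul_pow {f : ℕ → ℝ} {q : ℝ}
    (hf : Summable (fun n : ℕ => f (n + 1) * q ^ (n + 1))) (h : ℕ) :
    Summable (fun k : ℕ => f (k + 1 + h) * q ^ k) := by
  rcases eq_or_ne q 0 with rfl | hq
  · refine summable_of_ne_finset_zero (s := {0}) fun k hk => ?_
    rw [zero_pow (by simpa using hk), mul_zero]
  · have hshift := ((summable_nat_add_iff h).mpr hf).mul_right (q ^ (h + 1))⁻¹
    refine hshift.congr fun k => ?_
    rw [show k + h + 1 = k + 1 + h by omega, pow_add, pow_add]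
    field_simp
    ring

section WhittleBound

variable {p C : ℝ} {f : ℕ → ℝ}

lemma div_le_tsum_mul_pow (hp0 : 0 < p) (hp1 : p ≤ 1) (hmono : MonotoneOn f (Set.Ici 1))
    (hbc : Summable (fun h : ℕ => f (h + 1) * (1 - p) ^ (h + 1))) (h : ℕ) :
    f (h + 1) / p ≤ ∑' k : ℕ, f (k + 1 + h) * (1 - p) ^ k := by
  have hq0 : 0 ≤ 1 - p := by linarith
  have hq1 : 1 - p < 1 := by linarith
  calc f (h + 1) / p = ∑' k : ℕ, f (h + 1) * (1 - p) ^ k := by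
        rw [tsum_mul_left, tsum_geometric_of_lt_one hq0 hq1, sub_sub_cancel, div_eq_mul_inv]
    _ ≤ ∑' k : ℕ, f (k + 1 + h) * (1 - p) ^ k :=
        ((summable_geometric_of_lt_one hq0 hq1).mul_left _).tsum_le_tsum
          (fun k => mul_le_mul_of_nonneg_right
            (hmono (by simp) (Set.mem_Ici.mpr (by omega)) (by omega)) (pow_nonneg hq0 k))
          (summable_shift_mul_pow hbc h)

lemma sum_range_sub_le_of_whittle_lt (hp0 : 0 < p) (hp1 : p ≤ 1)
    (hmono : MonotoneOn f (Set.Ici 1))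
    (hbc : Summable (fun h : ℕ => f (h + 1) * (1 - p) ^ (h + 1)))
    {h : ℕ} (hlt : p ^ 2 * (h : ℝ) * (∑' k : ℕ, f (k + 1 + h) * (1 - p) ^ k)
        - p * ∑ j ∈ Icc 1 h, f j < C) :
    ∑ j ∈ range h, (f (h + 1) - f (j + 1)) ≤ C / p := by
  have htail := div_le_tsum_mul_pow hp0 hp1 hmono hbc h
  have hIcc : ∑ j ∈ Icc 1 h, f j = ∑ j ∈ range h, f (j + 1) := by
    rw [← Ico_add_one_right_eq_Icc, sum_Ico_eq_sum_range]
    simp [add_comm]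
  rw [hIcc] at hlt
  rw [sum_sub_distrib, sum_const, card_range, nsmul_eq_mul, le_div_iff₀ hp0]
  have hscale : p * (h * f (h + 1)) ≤ p ^ 2 * h * ∑' k : ℕ, f (k + 1 + h) * (1 - p) ^ k := by
    calc p * (h * f (h + 1)) = p ^ 2 * h * (f (h + 1) / p) := by field_simp
      _ ≤ _ := by gcongr
  linarith

lemma sum_range_sub_le_of_tendsto (hmono : MonotoneOn f (Set.Ici 1))
    {lam B : ℝ} (hlim : Tendsto (fun h => f (h + 1)) atTop (𝓝 lam))
    (hB : ∀ h, ∑ j ∈ range h, (f (h + 1) - f (j + 1)) ≤ B) (N : ℕ) :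
    ∑ j ∈ range N, (lam - f (j + 1)) ≤ B := by
  refine le_of_tendsto (tendsto_finsetSum _ fun j _ => hlim.sub tendsto_const_nhds) ?_
  filter_upwards [eventually_ge_atTop N] with h hNh
  calc ∑ j ∈ range N, (f (h + 1) - f (j + 1))
      ≤ ∑ j ∈ range h, (f (h + 1) - f (j + 1)) :=
        sum_le_sum_of_subset_of_nonneg (range_subset_range.mpr hNh) fun j hj _ =>
          sub_nonneg.mpr (hmono (by simp) (by simp) (by simp at hj; omega))
    _ ≤ B := hB h

end WhittleBound

lemma bddAbove_range_succ_of_sum_range_sub_le {f : ℕ → ℝ} {B : ℝ}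
    (hmono : MonotoneOn f (Set.Ici 1))
    (hB : ∀ h, ∑ j ∈ range h, (f (h + 1) - f (j + 1)) ≤ B) :
    BddAbove (Set.range fun n => f (n + 1)) := by
  refine ⟨f 1 + B, ?_⟩
  rintro _ ⟨n, rfl⟩
  have hfirst : f (n + 2) - f 1 ≤ ∑ j ∈ range (n + 1), (f (n + 2) - f (j + 1)) :=
    single_le_sum (f := fun j => f (n + 2) - f (j + 1))
      (fun j hj => sub_nonneg.mpr (hmono (by simp) (by simp) (by simp at hj; omega)))
      (mem_range.mpr n.succ_pos)
  linarith [hmono (by simp : n + 1 ∈ Set.Ici 1) (by simp : n + 2 ∈ Set.Ici 1) (by omega),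
    hB (n + 1)]

lemma min_add_mul_eq_right {p C S : ℝ} (hp0 : 0 ≤ p) (hp1 : p ≤ 1) (hC : 0 ≤ C) (hS : S ≤ C) :
    min (C + (1 - p) * S) S = S := by
  refine min_eq_right ?_
  nlinarith [mul_le_mul_of_nonneg_left hS hp0]

section Tails

variable {a : ℕ → ℝ} {lam : ℝ}

lemma summable_sub_add_left (hs : Summable (fun j : ℕ => lam - a (j + 1))) {m : ℕ} (hm : 1 ≤ m) :
    Summable (fun j : ℕ => lam - a (m + j)) := by
  obtain ⟨n, rfl⟩ := Nat.exists_eq_add_of_le' hm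
  exact ((summable_nat_add_iff n).mpr hs).congr fun j => by congr 2; omega

lemma tsum_sub_eq_add_tsum_sub {h : ℕ} (hs : Summable (fun j : ℕ => lam - a (h + j))) :
    ∑' j : ℕ, (lam - a (h + j)) = (lam - a h) + ∑' j : ℕ, (lam - a (h + 1 + j)) := by
  rw [hs.tsum_eq_zero_add]
  simp only [add_zero, add_assoc, add_comm 1]

lemma bellman_never_activate {p C : ℝ} (hp0 : 0 ≤ p) (hp1 : p ≤ 1) (hC : 0 ≤ C)
    (hle : ∀ h, 1 ≤ h → a h ≤ lam) (hs : Summable (fun j : ℕ => lam - a (j + 1)))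
    {h : ℕ} (hh : 1 ≤ h) :
    (C - ∑' j : ℕ, (lam - a (h + j))) = a h - lam + (C - ∑' j : ℕ, (lam - a (h + 1 + j))) ∧
      (C - ∑' j : ℕ, (lam - a (h + j))) ≤ C ∧
      (C - ∑' j : ℕ, (lam - a (h + j))) =
        a h - lam + min (C + (1 - p) * (C - ∑' j : ℕ, (lam - a (h + 1 + j))))
          (C - ∑' j : ℕ, (lam - a (h + 1 + j))) := by
  have hnonneg : 0 ≤ ∑' j : ℕ, (lam - a (h + 1 + j)) :=
    tsum_nonneg fun j => sub_nonneg.mpr (hle _ (by omega))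
  have hstep := tsum_sub_eq_add_tsum_sub (summable_sub_add_left hs hh)
  rw [min_add_mul_eq_right hp0 hp1 hC (by linarith)]
  exact ⟨by linarith, by linarith [hle h hh], by linarith⟩

end Tails

theorem stmt19_general (p : ℝ) (hp0 : 0 < p) (hp1 : p ≤ 1)
    (f : ℕ → ℝ)
    (hmono : ∀ h, 1 ≤ h → f h ≤ f (h + 1))
    (hbc : Summable (fun h : ℕ => f (h + 1) * (1 - p) ^ (h + 1)))
    (C : ℝ) (hC : 0 < C)
    (hlt : ∀ h : ℕ, 1 ≤ h →
      p ^ 2 * (h : ℝ) * (∑' k : ℕ, f (k + 1 + h) * (1 - p) ^ k)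
        - p * ∑ j ∈ Finset.Icc 1 h, f j < C) :
    ∃ lam : ℝ,
      Filter.Tendsto (fun h => f h) Filter.atTop (nhds lam) ∧
      (∀ h, 1 ≤ h → f h ≤ lam) ∧
      Summable (fun j : ℕ => lam - f (j + 1)) ∧
      (∑' j : ℕ, (lam - f (j + 1))) ≤ C / p ∧
      (∀ h, 1 ≤ h →
        (C - ∑' j : ℕ, (lam - f (h + j))) =
          f h - lam + (C - ∑' j : ℕ, (lam - f (h + 1 + j))) ∧
        (C - ∑' j : ℕ, (lam - f (h + j))) ≤ C ∧
        (C - ∑' j : ℕ, (lam - f (h + j))) =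
          f h - lam +
            min (C + (1 - p) * (C - ∑' j : ℕ, (lam - f (h + 1 + j))))
              (C - ∑' j : ℕ, (lam - f (h + 1 + j)))) := by
  have hmono' : MonotoneOn f (Set.Ici 1) := monotoneOn_nat_Ici_of_le_succ hmono
  have hkey (h : ℕ) : ∑ j ∈ range h, (f (h + 1) - f (j + 1)) ≤ C / p := by
    rcases Nat.eq_zero_or_pos h with rfl | hh
    · simpa using (div_pos hC hp0).le
    · exact sum_range_sub_le_of_whittle_lt hp0 hp1 hmono' hbc (hlt h hh)
  have hbdd := bddAbove_range_succ_of_sum_range_sub_le hmono' hkey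
  set lam := ⨆ n, f (n + 1)
  have hlim : Tendsto (fun n => f (n + 1)) atTop (𝓝 lam) :=
    tendsto_atTop_ciSup (monotone_nat_of_le_succ fun n => hmono (n + 1) le_add_self) hbdd
  have hle (h : ℕ) (hh : 1 ≤ h) : f h ≤ lam := by
    obtain ⟨n, rfl⟩ := Nat.exists_eq_add_of_le' hh
    exact le_ciSup hbdd n
  have hpartial := sum_range_sub_le_of_tendsto hmono' hlim hkey
  have hsum : Summable (fun j : ℕ => lam - f (j + 1)) :=
    summable_of_sum_range_le (fun j => sub_nonneg.mpr (hle _ le_add_self)) hpartial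
  exact ⟨lam, (tendsto_add_atTop_iff_nat 1).mp hlim, hle, hsum,
    hsum.tsum_le_of_sum_range_le hpartial,
    fun h hh => bellman_never_activate hp0.le hp1 hC.le hle hsum hh⟩

/-- Unreliable-channel never-activate case. If the Whittle index
`p²·h·Σ_{k=1}^∞ f(k+h)(1−p)^{k−1} − p·Σ_{j=1}^h f(j)` is `< C` for every `h ≥ 1`, then
`f` converges to a finite limit `λ = sup f`, `Σ_{j=1}^∞ (λ − f(j)) ≤ C/p` (the series of
nonnegative terms converges), and `S h := C − Σ_{j=h}^∞ (λ − f(j))` satisfies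
`S h = f h − λ + S (h+1)` and `S h ≤ C`, hence solves the Bellman equation
`S h = f h − λ + min {C + (1−p)·S (h+1), S (h+1)}` with the minimum always attained by
`S (h+1)` (never-activate is optimal with average cost λ). -/
theorem stmt19 (p : ℝ) (hp0 : 0 < p) (hp1 : p ≤ 1)
    (f : ℕ → ℝ)
    (hpos : ∀ h, 1 ≤ h → 0 ≤ f h)
    (hmono : ∀ h, 1 ≤ h → f h ≤ f (h + 1))
    (hbc : Summable (fun h : ℕ => f (h + 1) * (1 - p) ^ (h + 1)))
    (C : ℝ) (hC : 0 < C)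
    (hlt : ∀ h : ℕ, 1 ≤ h →
      p ^ 2 * (h : ℝ) * (∑' k : ℕ, f (k + 1 + h) * (1 - p) ^ k)
        - p * ∑ j ∈ Finset.Icc 1 h, f j < C) :
    ∃ lam : ℝ,
      Filter.Tendsto (fun h => f h) Filter.atTop (nhds lam) ∧
      (∀ h, 1 ≤ h → f h ≤ lam) ∧
      Summable (fun j : ℕ => lam - f (j + 1)) ∧
      (∑' j : ℕ, (lam - f (j + 1))) ≤ C / p ∧
      (∀ h, 1 ≤ h →
        (C - ∑' j : ℕ, (lam - f (h + j))) =
          f h - lam + (C - ∑' j : ℕ, (lam - f (h + 1 + j))) ∧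
        (C - ∑' j : ℕ, (lam - f (h + j))) ≤ C ∧
        (C - ∑' j : ℕ, (lam - f (h + j))) =
          f h - lam +
            min (C + (1 - p) * (C - ∑' j : ℕ, (lam - f (h + 1 + j))))
              (C - ∑' j : ℕ, (lam - f (h + 1 + j)))) :=
  stmt19_general p hp0 hp1 f hmono hbc C hC hlt
end
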